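/- arXiv:math/0609025 — 6 statements merged into one kernel-verified Lean document; each statement's English description precedes it below -/
import Mathlib

section
/- Let n ≥ 2 and let S be a smooth real-valued function on a neighborhood of (x₀,θ₀) ∈ ℝ^n × ℝ^n with S_{x′θ′}(x₀,θ₀) invertible. Fix θ = θ₀ and define π′(x) = (∇_{θ′}S(x,θ₀), x_n), which is a local diffeomorphism near x₀; let η_n be the function defined near π′(x₀) by η_n(π′(x)) = (∂S/∂θ_n)(x,θ₀). Then for all x near x₀, the partial derivative of η_n with respect to its last variable (at fixed first n−1 variables), evaluated at π′(x), equals h(x,θ₀) / det S_{x′θ′}(x,θ₀). -/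
open MeasureTheory Complex Filter Topology

noncomputable section

/-- Phase space `ℝ^n × ℝ^n`. -/
abbrev PS (n : ℕ) := (Fin n → ℝ) × (Fin n → ℝ)

/-- Standard basis vectors of `ℝ^n × ℝ^n`, indexed by `Fin n ⊕ Fin n`. -/
def psBasis {n : ℕ} : (Fin n ⊕ Fin n) → PS n
  | Sum.inl i => (Pi.single i 1, 0)
  | Sum.inr j => (0, Pi.single j 1)

/-- Coordinates of a vector of `ℝ^n × ℝ^n`. -/
def psCoord {n : ℕ} (v : PS n) : (Fin n ⊕ Fin n) → ℝ
  | Sum.inl i => v.1 i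
  | Sum.inr j => v.2 j

/-- Jacobian matrix of a map `F : ℝ^n × ℝ^n → ℝ^n × ℝ^n`. -/
def jacP {n : ℕ} (F : PS n → PS n) (p : PS n) : Matrix (Fin n ⊕ Fin n) (Fin n ⊕ Fin n) ℝ :=
  Matrix.of fun a b => psCoord (fderiv ℝ F p (psBasis b)) a

/-- Determinant of the Jacobian. -/
def jacDetP {n : ℕ} (F : PS n → PS n) (p : PS n) : ℝ := (jacP F p).det

/-- Derivative of a function along a vector field on `ℝ^n × ℝ^n`. -/
def vfDerivP {n : ℕ} (V : PS n → PS n) (f : PS n → ℝ) : PS n → ℝ :=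
  fun p => fderiv ℝ f p (V p)

/-- `F` drops rank simply by 1 near `p₀`: the corank of `dF` is at most one and
`d (det dF) ≠ 0` on a neighborhood of `p₀` intersected with the critical set. -/
def DropsRankSimplyP {n : ℕ} (F : PS n → PS n) (p₀ : PS n) : Prop :=
  ∃ U ∈ 𝓝 p₀, ∀ q ∈ U,
    2 * n - 1 ≤ (jacP F q).rank ∧ (jacDetP F q = 0 → fderiv ℝ (jacDetP F) q ≠ 0)

/-- `F` has type at most `k` at the critical point `p₀`. -/
def TypeAtMostP {n : ℕ} (F : PS n → PS n) (k : ℕ) (p₀ : PS n) : Prop :=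
  ∃ j, 1 ≤ j ∧ j ≤ k ∧ ∃ U ∈ 𝓝 p₀, ∃ V : PS n → PS n,
    ContDiffOn ℝ (⊤ : ℕ∞) V U ∧ (∀ q ∈ U, V q ≠ 0) ∧
    (∀ q ∈ U, jacDetP F q = 0 → fderiv ℝ F q (V q) = 0) ∧
    (vfDerivP V)^[j] (jacDetP F) p₀ ≠ 0

/-- Gradient of `S` is the `x`-variables. -/
def gradX {n : ℕ} (S : PS n → ℝ) (p : PS n) : Fin n → ℝ :=
  fun i => fderiv ℝ S p (Pi.single i 1, 0)

/-- Gradient of `S` in the `θ`-variables. -/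
def gradT {n : ℕ} (S : PS n → ℝ) (p : PS n) : Fin n → ℝ :=
  fun j => fderiv ℝ S p (0, Pi.single j 1)

/-- Left projection `π_L (x, θ) = (x, ∇ₓ S)`. -/
def piL {n : ℕ} (S : PS n → ℝ) : PS n → PS n := fun p => (p.1, gradX S p)

/-- Right projection `π_R (x, θ) = (θ, ∇_θ S)`. -/
def piR {n : ℕ} (S : PS n → ℝ) : PS n → PS n := fun p => (p.2, gradT S p)

/-- The mixed Hessian `S_{xθ}`, with entries `∂²S/∂x_i∂θ_j`. -/
def mixedHess {n : ℕ} (S : PS n → ℝ) (p : PS n) : Matrix (Fin n) (Fin n) ℝ :=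
  Matrix.of fun i j =>
    fderiv ℝ (fun q => fderiv ℝ S q ((0 : Fin n → ℝ), Pi.single j 1)) p
      (Pi.single i 1, (0 : Fin n → ℝ))

/-- `h(x,θ) = det S_{xθ}(x,θ)`. -/
def hDet {n : ℕ} (S : PS n → ℝ) (p : PS n) : ℝ := (mixedHess S p).det

/-- The oscillatory integral operator `T_λ` with phase `S` and density `ψ`. -/
def oscOp {n : ℕ} (S ψ : PS n → ℝ) (lam : ℝ) (u : (Fin n → ℝ) → ℂ) : (Fin n → ℝ) → ℂ :=
  fun x => ∫ θ, Complex.exp (Complex.I * lam * S (x, θ)) * (ψ (x, θ) : ℂ) * u θ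

/-- The `(n-1) × (n-1)` block `S_{x'θ'}` of the mixed Hessian. -/
def blockHess {m : ℕ} (S : PS (m + 1) → ℝ) (p : PS (m + 1)) : Matrix (Fin m) (Fin m) ℝ :=
  Matrix.of fun i j => mixedHess S p i.castSucc j.castSucc

/-- The coefficients `S_{x_nθ'} (S_{x'θ'})⁻¹` of the vector field `K_R`. -/
def KRcoef {m : ℕ} (S : PS (m + 1) → ℝ) (p : PS (m + 1)) : Fin m → ℝ :=
  Matrix.vecMul (fun j => mixedHess S p (Fin.last m) j.castSucc) (blockHess S p)⁻¹

/-- The direction (in the `x`-variables) of the vector field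
`K_R = ∂_{x_n} - S_{x_nθ'} (S_{x'θ'})⁻¹ · ∇_{x'}`. -/
def KRvec {m : ℕ} (S : PS (m + 1) → ℝ) (p : PS (m + 1)) : Fin (m + 1) → ℝ :=
  Fin.snoc (fun i => -KRcoef S p i) 1

/-- The vector field `K_R` acting on functions on `ℝ^n × ℝ^n`. -/
def KR {m : ℕ} (S : PS (m + 1) → ℝ) (f : PS (m + 1) → ℝ) : PS (m + 1) → ℝ :=
  fun p => fderiv ℝ f p (KRvec S p, 0)

lemma clmApplySum {k : ℕ} (L : (Fin k → ℝ) →L[ℝ] ℝ) (v : Fin k → ℝ) :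
    L v = ∑ j, v j * L (Pi.single j 1) := by
  have hv : v = ∑ i, v i • (Pi.single i 1 : Fin k → ℝ) := by
    funext j; simp [Finset.sum_apply, Pi.single_apply]
  conv_lhs => rw [hv]
  rw [map_sum]
  simp [smul_eq_mul]

lemma detLastRowSingle {m : ℕ} (M : Matrix (Fin (m+1)) (Fin (m+1)) ℝ)
    (h : M (Fin.last m) = Pi.single (Fin.last m) 1) :
    M.det = (M.submatrix Fin.castSucc Fin.castSucc).det := by
  rw [Matrix.det_succ_row M (Fin.last m)]
  rw [Finset.sum_eq_single (Fin.last m)]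
  · simp only [h, Fin.succAbove_last, Pi.single_eq_same]
    rw [show ((Fin.last m : ℕ) + (Fin.last m : ℕ)) = m + m from rfl]
    rw [(Even.neg_one_pow ⟨m, rfl⟩ : (-1:ℝ)^(m+m) = 1)]
    ring
  · intro j _ hj
    rw [h]
    simp [Pi.single_apply, hj.symm]
  · simp

/-- Lemma 1: with `π'(x) = (∇_{θ'}S(x,θ₀), x_n)` and `η_n` defined near
`π'(x₀)` by `η_n (π' x) = ∂S/∂θ_n (x, θ₀)`, one has
`(∂_{x_n})_{η'} η_n = h(x,θ₀) / det S_{x'θ'}(x,θ₀)` for `x` near `x₀`. -/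
theorem derivative_of_eta_last (m : ℕ) (hm : 1 ≤ m)
    (S : PS (m + 1) → ℝ) (x₀ θ₀ : Fin (m + 1) → ℝ)
    (W : Set (PS (m + 1))) (hW : W ∈ 𝓝 (x₀, θ₀)) (hS : ContDiffOn ℝ (⊤ : ℕ∞) S W)
    (hinv : IsUnit (blockHess S (x₀, θ₀)).det)
    (π' : (Fin (m + 1) → ℝ) → (Fin (m + 1) → ℝ))
    (hπ' : π' = fun x => Fin.snoc (fun j : Fin m => gradT S (x, θ₀) j.castSucc)
      (x (Fin.last m)))
    (η : (Fin (m + 1) → ℝ) → ℝ) (Uη : Set (Fin (m + 1) → ℝ)) (hUη : Uη ∈ 𝓝 (π' x₀))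
    (hη : ContDiffOn ℝ (⊤ : ℕ∞) η Uη)
    (U : Set (Fin (m + 1) → ℝ)) (hU : U ∈ 𝓝 x₀)
    (hcomp : ∀ x ∈ U, η (π' x) = gradT S (x, θ₀) (Fin.last m)) :
    ∀ᶠ x in 𝓝 x₀,
      fderiv ℝ η (π' x) (Pi.single (Fin.last m) 1) =
        hDet S (x, θ₀) / (blockHess S (x, θ₀)).det := by
  obtain ⟨V, hVW, hVo, hpV⟩ := mem_nhds_iff.mp hW
  obtain ⟨Vη, hVηsub, hVηo, hVηmem⟩ := mem_nhds_iff.mp hUη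
  have hSV : ∀ p ∈ V, ContDiffAt ℝ (⊤ : ℕ∞) S p := fun p hp =>
    (hS.mono hVW).contDiffAt (hVo.mem_nhds hp)
  have hΦ : ∀ p ∈ V, ContDiffAt ℝ (⊤ : ℕ∞) (fderiv ℝ S) p := fun p hp =>
    (hSV p hp).fderiv_right (by simp)
  have hΦw : ∀ (w : PS (m+1)), ∀ p ∈ V, ContDiffAt ℝ (⊤ : ℕ∞) (fun q => fderiv ℝ S q w) p :=
    fun w p hp => (hΦ p hp).clm_apply contDiffAt_const
  set D : PS (m+1) → Fin (m+1) → (PS (m+1) →L[ℝ] ℝ) :=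
    fun p j => fderiv ℝ (fun q => fderiv ℝ S q ((0 : Fin (m+1) → ℝ), Pi.single j 1)) p with hD
  have hmix : ∀ p i j, mixedHess S p i j = D p j (Pi.single i 1, 0) := fun p i j => rfl
  have hιd : ∀ x : Fin (m+1) → ℝ,
      HasFDerivAt (fun y : Fin (m+1) → ℝ => (y, θ₀))
        (ContinuousLinearMap.inl ℝ (Fin (m+1) → ℝ) (Fin (m+1) → ℝ)) x :=
    fun x => hasFDerivAt_prodMk_left x θ₀
  have hgradd : ∀ (j : Fin (m+1)) (x), (x, θ₀) ∈ V →
      HasFDerivAt (fun y => fderiv ℝ S (y, θ₀) ((0 : Fin (m+1) → ℝ), Pi.single j 1))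
        ((D (x, θ₀) j).comp (ContinuousLinearMap.inl ℝ _ _)) x := by
    intro j x hx
    exact (((hΦw _ _ hx).differentiableAt (by simp)).hasFDerivAt).comp x (hιd x)
  set Lπ : (Fin (m+1) → ℝ) → ((Fin (m+1) → ℝ) →L[ℝ] (Fin (m+1) → ℝ)) :=
    fun x => ContinuousLinearMap.pi (fun j => Fin.lastCases
      (ContinuousLinearMap.proj (Fin.last m))
      (fun j' => (D (x, θ₀) (j'.castSucc)).comp (ContinuousLinearMap.inl ℝ _ _)) j) with hLπ
  have hπd : ∀ x, (x, θ₀) ∈ V → HasFDerivAt π' (Lπ x) x := by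
    intro x hx
    rw [hπ', hasFDerivAt_pi']
    intro j
    rw [hLπ, ContinuousLinearMap.proj_pi]
    induction j using Fin.lastCases with
    | last =>
      simp only [Fin.snoc_last, Fin.lastCases_last]
      exact hasFDerivAt_apply (Fin.last m) x
    | cast j' =>
      simp only [Fin.snoc_castSucc, Fin.lastCases_castSucc]
      exact hgradd j'.castSucc x hx
  have hcontmix : ∀ i j, ContinuousAt (fun x => mixedHess S (x, θ₀) i j) x₀ := by
    intro i j
    have h1 : ContinuousAt (fun p => D p j) (x₀, θ₀) :=
      ((hΦw _ _ hpV).fderiv_right (m := (⊤ : ℕ∞)) (by simp)).continuousAt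
    have h2 : ContinuousAt (fun p => D p j ((Pi.single i 1, 0) : PS (m+1))) (x₀, θ₀) :=
      ((ContinuousLinearMap.apply ℝ ℝ ((Pi.single i 1, 0) : PS (m+1))).continuous.continuousAt).comp h1
    have h3 : ContinuousAt (fun x : Fin (m+1) → ℝ => ((x, θ₀) : PS (m+1))) x₀ :=
      (continuous_id.prodMk continuous_const).continuousAt
    have h4 : ContinuousAt ((fun p => D p j ((Pi.single i 1, 0) : PS (m+1))) ∘
        (fun x : Fin (m+1) → ℝ => ((x, θ₀) : PS (m+1)))) x₀ := ContinuousAt.comp (x := x₀) h2 h3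
    exact h4
  have hdetcont : ContinuousAt (fun x => (blockHess S (x, θ₀)).det) x₀ := by
    have hB : ContinuousAt (fun x => blockHess S (x, θ₀)) x₀ := by
      refine continuousAt_pi.2 fun i => ?_; refine continuousAt_pi.2 fun j => ?_
      exact hcontmix i.castSucc j.castSucc
    exact ((continuous_id.matrix_det).continuousAt).comp hB
  have hdet0 : (blockHess S (x₀, θ₀)).det ≠ 0 := by
    simpa using hinv.ne_zero
  have ev1 : ∀ᶠ x in 𝓝 x₀, (x, θ₀) ∈ V :=
    (continuous_id.prodMk continuous_const).continuousAt.eventually_mem (hVo.mem_nhds hpV)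
  have hπc : ContinuousAt π' x₀ := (hπd x₀ hpV).continuousAt
  have ev2 : ∀ᶠ x in 𝓝 x₀, π' x ∈ Vη := hπc.eventually_mem (hVηo.mem_nhds hVηmem)
  have ev3 : ∀ᶠ x in 𝓝 x₀, x ∈ interior U := interior_mem_nhds.mpr hU
  have ev4 : ∀ᶠ x in 𝓝 x₀, (blockHess S (x, θ₀)).det ≠ 0 := hdetcont.eventually_ne hdet0
  filter_upwards [ev1, ev2, ev3, ev4] with x hx1 hx2 hx3 hx4
  set g : Fin (m+1) → ℝ := fun j => fderiv ℝ η (π' x) (Pi.single j 1) with hg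
  set A : Matrix (Fin (m+1)) (Fin (m+1)) ℝ := Matrix.of fun j i =>
    Fin.lastCases (motive := fun _ => ℝ) ((Pi.single (Fin.last m) (1:ℝ) : Fin (m+1) → ℝ) i)
      (fun j' => mixedHess S (x, θ₀) i j'.castSucc) j with hA
  have hηd : DifferentiableAt ℝ η (π' x) :=
    ((hη.mono hVηsub).contDiffAt (hVηo.mem_nhds hx2)).differentiableAt (by simp)
  have hπx : HasFDerivAt π' (Lπ x) x := hπd x hx1
  have hchain : fderiv ℝ (fun y => η (π' y)) x = (fderiv ℝ η (π' x)).comp (Lπ x) := by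
    rw [show (fun y => η (π' y)) = η ∘ π' from rfl, fderiv_comp x hηd hπx.differentiableAt,
      hπx.fderiv]
  have hEq : (fun y => η (π' y)) =ᶠ[𝓝 x]
      (fun y => fderiv ℝ S (y, θ₀) ((0 : Fin (m+1) → ℝ), Pi.single (Fin.last m) 1)) := by
    have hUx : U ∈ 𝓝 x := mem_interior_iff_mem_nhds.mp hx3
    filter_upwards [hUx] with y hy
    exact hcomp y hy
  have hfd := hEq.fderiv_eq (𝕜 := ℝ)
  have hRHS := (hgradd (Fin.last m) x hx1).fderiv
  have key : ∀ i, ∑ j, A j i * g j = mixedHess S (x, θ₀) i (Fin.last m) := by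
    intro i
    have h1 : fderiv ℝ (fun y => η (π' y)) x (Pi.single i 1)
        = mixedHess S (x, θ₀) i (Fin.last m) := by
      rw [hfd, hRHS]; rfl
    rw [hchain, ContinuousLinearMap.comp_apply] at h1
    have h2 : (Lπ x) (Pi.single i 1) = fun j => A j i := by
      funext j
      induction j using Fin.lastCases with
      | last =>
        simp [hLπ, hA, ContinuousLinearMap.pi_apply, Pi.single_apply, eq_comm]
      | cast j' =>
        simp [hLπ, hA, hmix]
    rw [h2, clmApplySum] at h1
    simpa [hg] using h1
  have hsum : (∑ k, g k • A k) = fun i => mixedHess S (x, θ₀) i (Fin.last m) := by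
    funext i
    rw [Finset.sum_apply]
    rw [← key i]
    exact Finset.sum_congr rfl fun k _ => by simp [mul_comm]
  have hdetA : A.det = (blockHess S (x, θ₀)).det := by
    rw [detLastRowSingle A (by funext i; simp [hA])]
    rw [← Matrix.det_transpose (blockHess S (x, θ₀))]
    congr 1
    ext j i
    simp [hA, Matrix.submatrix_apply, blockHess, Matrix.transpose_apply]
  have hupdate : A.updateRow (Fin.last m) (fun i => mixedHess S (x, θ₀) i (Fin.last m))
      = Matrix.transpose (mixedHess S (x, θ₀)) := by
    ext j i
    refine Fin.lastCases ?_ ?_ j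
    · simp [Matrix.updateRow_self]
    · intro j'
      rw [Matrix.updateRow_ne (Fin.castSucc_lt_last j').ne]
      simp [hA]
  have hdetU := Matrix.det_updateRow_sum A (Fin.last m) g
  rw [hsum, hupdate, Matrix.det_transpose, hdetA] at hdetU
  show g (Fin.last m) = _
  rw [eq_div_iff hx4, hDet]
  rw [hdetU]
  simp [smul_eq_mul]


end
end

section
/- Let k ≥ 1, ℏ > 0, 0 ≤ l ≤ 1/12, let σ_1, …, σ_k ∈ {±1}, and let f ∈ C^k([0,l]). Assume f(0) ≥ ℏ/2 and f(l) ≥ ℏ/2; assume σ_j f^{(j)}(0) ≥ −2ℏ and σ_j f^{(j)}(l) ≥ −2ℏ for every 1 ≤ j ≤ k−1; and assume σ_k f^{(k)}(t) ≥ −3ℏ for all t ∈ [0,l]. Then f(t) ≥ ℏ/4 for all t ∈ [0,l]. -/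
/-!
If `σ_{j+1} f^{(j+1)} ≥ -3ℏ` on `[0,l]`, then `σ_j f^{(j)}` drops by at most `3ℏl ≤ ℏ/4` when
moving away from the left endpoint (if `σ_j σ_{j+1} = 1`) or from the right one (if
`σ_j σ_{j+1} = -1`). So the endpoint bounds `-2ℏ` give `σ_j f^{(j)} ≥ -9ℏ/4 ≥ -3ℏ` on `[0,l]`,
and downward induction from `j = k` reaches `σ_1 f' ≥ -3ℏ`; one more step turns
`f(0), f(l) ≥ ℏ/2` into `f ≥ ℏ/4`.
-/

open Set

section Interval

variable {a b C : ℝ} {g : ℝ → ℝ}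

lemma deriv_eq_derivWithin_Icc {x : ℝ} (hx : x ∈ Ioo a b) :
    deriv g x = derivWithin g (Icc a b) x :=
  (derivWithin_of_mem_nhds (Icc_mem_nhds hx.1 hx.2)).symm

lemma sub_mul_le_of_neg_le_derivWithin_Icc (hg : DifferentiableOn ℝ g (Icc a b))
    (hg' : ∀ x ∈ Ioo a b, -C ≤ derivWithin g (Icc a b) x) {t : ℝ} (ht : t ∈ Icc a b) :
    g a - C * (t - a) ≤ g t := by
  have := (convex_Icc a b).mul_sub_le_image_sub_of_le_deriv hg.continuousOn
    (by rw [interior_Icc]; exact hg.mono Ioo_subset_Icc_self)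
    (by rw [interior_Icc]; intro x hx; rw [deriv_eq_derivWithin_Icc hx]; exact hg' x hx)
    a (left_mem_Icc.2 (ht.1.trans ht.2)) t ht ht.1
  linarith

lemma sub_mul_le_of_derivWithin_le_Icc (hg : DifferentiableOn ℝ g (Icc a b))
    (hg' : ∀ x ∈ Ioo a b, derivWithin g (Icc a b) x ≤ C) {t : ℝ} (ht : t ∈ Icc a b) :
    g b - C * (b - t) ≤ g t := by
  have := (convex_Icc a b).image_sub_le_mul_sub_of_deriv_le hg.continuousOn
    (by rw [interior_Icc]; exact hg.mono Ioo_subset_Icc_self)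
    (by rw [interior_Icc]; intro x hx; rw [deriv_eq_derivWithin_Icc hx]; exact hg' x hx)
    t ht b (right_mem_Icc.2 (ht.1.trans ht.2)) ht.2
  linarith

lemma sub_mul_le_of_neg_le_mul_derivWithin_Icc {m ε : ℝ} (hε : ε = 1 ∨ ε = -1)
    (hC : 0 ≤ C) (hg : DifferentiableOn ℝ g (Icc a b))
    (hg' : ∀ x ∈ Ioo a b, -C ≤ ε * derivWithin g (Icc a b) x)
    (ha : m ≤ g a) (hb : m ≤ g b) {t : ℝ} (ht : t ∈ Icc a b) :
    m - C * (b - a) ≤ g t := by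
  rcases hε with rfl | rfl
  · have := sub_mul_le_of_neg_le_derivWithin_Icc hg (fun x hx ↦ by simpa using hg' x hx) ht
    nlinarith [ht.2]
  · have := sub_mul_le_of_derivWithin_le_Icc (C := C) hg (fun x hx ↦ by linarith [hg' x hx]) ht
    nlinarith [ht.1]

end Interval

lemma neg_three_mul_le_mul_iteratedDerivWithin {k : ℕ} {hbar l : ℝ} (hhbar : 0 < hbar)
    (hl0 : 0 < l) (hl : l ≤ 1 / 12)
    {σ : ℕ → ℝ} (hσ : ∀ j, 1 ≤ j → j ≤ k → σ j = 1 ∨ σ j = -1)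
    {f : ℝ → ℝ} (hf : ContDiffOn ℝ k f (Icc 0 l))
    (hj : ∀ j, 1 ≤ j → j ≤ k - 1 →
      -(2 * hbar) ≤ σ j * iteratedDerivWithin j f (Icc 0 l) 0 ∧
      -(2 * hbar) ≤ σ j * iteratedDerivWithin j f (Icc 0 l) l)
    (hk' : ∀ t ∈ Icc 0 l, -(3 * hbar) ≤ σ k * iteratedDerivWithin k f (Icc 0 l) t)
    {j : ℕ} (hj1 : 1 ≤ j) (hjk : j ≤ k) :
    ∀ t ∈ Icc 0 l, -(3 * hbar) ≤ σ j * iteratedDerivWithin j f (Icc 0 l) t := by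
  induction hjk using Nat.decreasingInduction with
  | self => exact hk'
  | of_succ j hjk ih =>
    intro t ht
    have hσj : σ j * σ j = 1 := by rcases hσ j hj1 hjk.le with h | h <;> simp [h]
    have hsign : σ j * σ (j + 1) = 1 ∨ σ j * σ (j + 1) = -1 := by
      rcases hσ j hj1 hjk.le with h | h <;> rcases hσ (j + 1) (by omega) hjk with h' | h' <;>
        simp [h, h']
    have hdiff : DifferentiableOn ℝ (iteratedDerivWithin j f (Icc 0 l)) (Icc 0 l) :=
      hf.differentiableOn_iteratedDerivWithin (by exact_mod_cast hjk) (uniqueDiffOn_Icc hl0)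
    have hderiv : ∀ x ∈ Ioo 0 l, -(3 * hbar) ≤ σ j * σ (j + 1) *
        derivWithin (fun x ↦ σ j * iteratedDerivWithin j f (Icc 0 l) x) (Icc 0 l) x := by
      intro x hx
      rw [derivWithin_const_mul _ (hdiff x (Ioo_subset_Icc_self hx)), ← iteratedDerivWithin_succ]
      calc -(3 * hbar) ≤ σ (j + 1) * iteratedDerivWithin (j + 1) f (Icc 0 l) x :=
            ih (by omega) x (Ioo_subset_Icc_self hx)
        _ = σ j * σ (j + 1) * (σ j * iteratedDerivWithin (j + 1) f (Icc 0 l) x) := by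
            linear_combination (-(σ (j + 1) * iteratedDerivWithin (j + 1) f (Icc 0 l) x)) * hσj
    have hbound := sub_mul_le_of_neg_le_mul_derivWithin_Icc hsign (by positivity)
      (hdiff.const_mul _) hderiv (hj j hj1 (by omega)).1 (hj j hj1 (by omega)).2 ht
    nlinarith

/-- Lemma 2: if `f(0), f(l) ≥ ℏ/2`, the intermediate derivatives satisfy
`σ_j f^{(j)} ≥ -2ℏ` at the endpoints, and `σ_k f^{(k)} ≥ -3ℏ` on `[0,l]` with `l ≤ 1/12`,
then `f ≥ ℏ/4` on `[0,l]`. -/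
theorem lower_bound_on_segment (k : ℕ) (hk : 1 ≤ k) (hbar l : ℝ) (hhbar : 0 < hbar)
    (hl0 : 0 ≤ l) (hl : l ≤ 1 / 12)
    (σ : ℕ → ℝ) (hσ : ∀ j, 1 ≤ j → j ≤ k → σ j = 1 ∨ σ j = -1)
    (f : ℝ → ℝ) (hf : ContDiffOn ℝ k f (Icc 0 l))
    (h0 : hbar / 2 ≤ f 0) (hl' : hbar / 2 ≤ f l)
    (hj : ∀ j, 1 ≤ j → j ≤ k - 1 →
      -(2 * hbar) ≤ σ j * iteratedDerivWithin j f (Icc 0 l) 0 ∧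
      -(2 * hbar) ≤ σ j * iteratedDerivWithin j f (Icc 0 l) l)
    (hk' : ∀ t ∈ Icc 0 l, -(3 * hbar) ≤ σ k * iteratedDerivWithin k f (Icc 0 l) t) :
    ∀ t ∈ Icc 0 l, hbar / 4 ≤ f t := by
  intro t ht
  rcases hl0.eq_or_lt with rfl | hlpos
  · obtain rfl : t = 0 := le_antisymm ht.2 ht.1
    linarith
  have hf' := neg_three_mul_le_mul_iteratedDerivWithin hhbar hlpos hl hσ hf hj hk' le_rfl hk
  have hft := sub_mul_le_of_neg_le_mul_derivWithin_Icc (C := 3 * hbar) (hσ 1 le_rfl hk) (by positivity)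
    (hf.differentiableOn (by exact_mod_cast (by omega : k ≠ 0)))
    (fun x hx ↦ by simpa [iteratedDerivWithin_one] using hf' x (Ioo_subset_Icc_self hx)) h0 hl' ht
  nlinarith
end

section
/- Let k ≥ 1, let f ∈ C^k([0,l]) with 0 ≤ l ≤ 1, let σ_1, …, σ_{k−1} ∈ {±1}, and let ε > 0, κ > 0. Assume σ_j f^{(j)}(0) ≥ −ε and σ_j f^{(j)}(l) ≥ −ε for every 1 ≤ j ≤ k−1, and |f^{(k)}(t)| ≥ κ for all t ∈ [0,l]. Then |f(l) − f(0)| ≥ κ l^k / k! − (k−1) ε l. -/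
/-!
The top derivative does not vanish, so it has a constant sign. Integrating down from `f⁽ᵏ⁾` to
`f'`, each `σ_j f⁽ʲ⁾` with `m = k - j` is bounded below by `κ |t - c|^m / m! - m ε`, where the
centre `c` is whichever endpoint of `[0, l]` the boundary condition `σ_j f⁽ʲ⁾ ≥ -ε` was used at;
integrating from an endpoint costs one more `ε` since `l ≤ 1`. Superadditivity of `x ↦ x^(m+1)`
on `[0, ∞)` bounds the increment of an antiderivative of such a function over any `[a, b]` below
by `κ (b - a)^(m+1) / (m+1)! - m ε (b - a)`, whatever the centre; for `f` on `[0, l]` this is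
the claim.
-/

open Set

lemma sub_le_sub_of_hasDerivAt_le {F G F' G' : ℝ → ℝ} {a b : ℝ} (hab : a ≤ b)
    (hF : ContinuousOn F (Icc a b)) (hG : ContinuousOn G (Icc a b))
    (hF' : ∀ t ∈ Ioo a b, HasDerivAt F (F' t) t) (hG' : ∀ t ∈ Ioo a b, HasDerivAt G (G' t) t)
    (hle : ∀ t ∈ Ioo a b, F' t ≤ G' t) : F b - F a ≤ G b - G a := by
  have hmono : MonotoneOn (fun t => G t - F t) (Icc a b) := by
    refine monotoneOn_of_hasDerivWithinAt_nonneg (f' := fun t => G' t - F' t) (convex_Icc a b)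
      (hG.sub hF) (fun t ht => ?_) (fun t ht => ?_) <;> rw [interior_Icc] at ht
    · exact ((hG' t ht).sub (hF' t ht)).hasDerivWithinAt
    · exact sub_nonneg.2 (hle t ht)
  linarith [hmono (left_mem_Icc.2 hab) (right_mem_Icc.2 hab) hab]

lemma hasDerivAt_pow_succ_div_factorial (m : ℕ) (t : ℝ) :
    HasDerivAt (fun t : ℝ => t ^ (m + 1) / (m + 1).factorial) (t ^ m / m.factorial) t := by
  refine ((hasDerivAt_pow (m + 1) t).div_const ((m + 1).factorial : ℝ)).congr_deriv ?_
  rw [Nat.factorial_succ]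
  push_cast
  field_simp

lemma le_sub_of_pow_div_factorial_le_deriv {G g : ℝ → ℝ} {a b ε κ : ℝ} {m : ℕ} (hκ : 0 ≤ κ)
    (ha : 0 ≤ a) (hab : a ≤ b) (hG : ContinuousOn G (Icc a b))
    (hg : ∀ t ∈ Ioo a b, HasDerivAt G (g t) t)
    (hbound : ∀ t ∈ Ioo a b, κ * t ^ m / m.factorial - m * ε ≤ g t) :
    κ * (b - a) ^ (m + 1) / (m + 1).factorial - m * ε * (b - a) ≤ G b - G a := by
  set P : ℝ → ℝ := fun t => κ * (t ^ (m + 1) / (m + 1).factorial) - m * ε * t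
  have hP : ∀ t, HasDerivAt P (κ * (t ^ m / m.factorial) - m * ε) t := fun t =>
    (((hasDerivAt_pow_succ_div_factorial m t).const_mul κ).sub
      ((hasDerivAt_id t).const_mul ((m : ℝ) * ε))).congr_deriv (by simp)
  have hPG : P b - P a ≤ G b - G a :=
    sub_le_sub_of_hasDerivAt_le hab (fun t _ => (hP t).continuousAt.continuousWithinAt) hG
      (fun t _ => hP t) hg (fun t ht => by rw [← mul_div_assoc]; exact hbound t ht)
  have hsuper : (b - a) ^ (m + 1) ≤ b ^ (m + 1) - a ^ (m + 1) := by
    have := pow_add_pow_le (n := m + 1) (sub_nonneg.2 hab) ha m.succ_ne_zero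
    rw [sub_add_cancel] at this
    linarith
  have hpow : κ * (b - a) ^ (m + 1) / (m + 1).factorial ≤
      κ * (b ^ (m + 1) / (m + 1).factorial) - κ * (a ^ (m + 1) / (m + 1).factorial) := by
    rw [← mul_sub, ← sub_div, mul_div_assoc]
    gcongr
  simp only [P] at hPG
  linarith

lemma le_sub_of_pow_sub_div_factorial_le_deriv {G g : ℝ → ℝ} {a b l ε κ : ℝ} {m : ℕ}
    (hκ : 0 ≤ κ) (hab : a ≤ b) (hb : b ≤ l) (hG : ContinuousOn G (Icc a b))
    (hg : ∀ t ∈ Ioo a b, HasDerivAt G (g t) t)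
    (hbound : ∀ t ∈ Ioo a b, κ * (l - t) ^ m / m.factorial - m * ε ≤ g t) :
    κ * (b - a) ^ (m + 1) / (m + 1).factorial - m * ε * (b - a) ≤ G b - G a := by
  have hmaps : MapsTo (fun s => l - s) (Icc (l - b) (l - a)) (Icc a b) :=
    fun s hs => ⟨by linarith [hs.2], by linarith [hs.1]⟩
  have hreflect := le_sub_of_pow_div_factorial_le_deriv (G := fun s => -G (l - s))
    (g := fun s => g (l - s)) (ε := ε) hκ (sub_nonneg.2 hb) (sub_le_sub_left hab l)
    (hG.comp (continuous_sub_left l).continuousOn hmaps).neg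
    (fun s hs => by
      have hs' : l - s ∈ Ioo a b := ⟨by linarith [hs.2], by linarith [hs.1]⟩
      exact ((hg _ hs').comp s ((hasDerivAt_id s).const_sub l)).neg.congr_deriv (by simp))
    (fun s hs => by
      have hs' : l - s ∈ Ioo a b := ⟨by linarith [hs.2], by linarith [hs.1]⟩
      simpa using hbound _ hs')
  simp only [sub_sub_cancel, sub_sub_sub_cancel_left] at hreflect
  linarith

def SignedPowerBound (l ε κ : ℝ) (m : ℕ) (g : ℝ → ℝ) : Prop :=
  ∃ τ c : ℝ, (τ = 1 ∨ τ = -1) ∧ (c = 0 ∨ c = l) ∧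
    ∀ t ∈ Icc 0 l, κ * |t - c| ^ m / m.factorial - m * ε ≤ τ * g t

namespace SignedPowerBound

variable {l ε κ : ℝ} {m : ℕ} {G g : ℝ → ℝ}

lemma exists_sign_le_sub (hκ : 0 ≤ κ) (h : SignedPowerBound l ε κ m g)
    (hG : ContinuousOn G (Icc 0 l)) (hg : ∀ t ∈ Ioo 0 l, HasDerivAt G (g t) t) :
    ∃ τ : ℝ, (τ = 1 ∨ τ = -1) ∧ ∀ a b, 0 ≤ a → a ≤ b → b ≤ l →
      κ * (b - a) ^ (m + 1) / (m + 1).factorial - m * ε * (b - a) ≤ τ * (G b - G a) := by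
  obtain ⟨τ, c, hτ, hc, hbound⟩ := h
  refine ⟨τ, hτ, fun a b ha hab hb => ?_⟩
  have hIcc : Icc a b ⊆ Icc 0 l := Icc_subset_Icc ha hb
  have hIoo : Ioo a b ⊆ Ioo 0 l := Ioo_subset_Ioo ha hb
  have hτG : ContinuousOn (fun t => τ * G t) (Icc a b) := continuousOn_const.mul (hG.mono hIcc)
  have hτg : ∀ t ∈ Ioo a b, HasDerivAt (fun t => τ * G t) (τ * g t) t :=
    fun t ht => (hg t (hIoo ht)).const_mul τ
  rw [mul_sub τ]
  rcases hc with rfl | rfl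
  · refine le_sub_of_pow_div_factorial_le_deriv hκ ha hab hτG hτg fun t ht => ?_
    simpa [abs_of_nonneg (ha.trans ht.1.le)] using hbound t (Ioo_subset_Icc_self (hIoo ht))
  · refine le_sub_of_pow_sub_div_factorial_le_deriv hκ hab hb hτG hτg fun t ht => ?_
    simpa [abs_sub_comm t, abs_of_nonneg (sub_nonneg.2 (ht.2.le.trans hb))] using
      hbound t (Ioo_subset_Icc_self (hIoo ht))

/-- The boundary condition is used at `0` or at `l`, according as the sign of the bound on `g`
agrees with `σ` or not; either way `σ` is the sign of the new bound. -/
lemma of_hasDerivAt (hl1 : l ≤ 1) (hε : 0 ≤ ε) (hκ : 0 ≤ κ) {σ : ℝ} (hσ : σ = 1 ∨ σ = -1)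
    (hend : -ε ≤ σ * G 0 ∧ -ε ≤ σ * G l) (hG : ContinuousOn G (Icc 0 l))
    (hg : ∀ t ∈ Ioo 0 l, HasDerivAt G (g t) t) (h : SignedPowerBound l ε κ m g) :
    SignedPowerBound l ε κ (m + 1) G := by
  obtain ⟨τ, hτ, hinc⟩ := h.exists_sign_le_sub hκ hG hg
  have hτσ : τ = σ ∨ τ = -σ := by
    rcases hτ with rfl | rfl <;> rcases hσ with rfl | rfl <;> norm_num
  have hmε : ∀ s ≤ 1, (m : ℝ) * ε * s ≤ m * ε :=
    fun s hs => mul_le_of_le_one_right (by positivity) hs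
  rcases hτσ with rfl | rfl
  · refine ⟨τ, 0, hτ, Or.inl rfl, fun t ht => ?_⟩
    have := hinc 0 t le_rfl ht.1 ht.2
    rw [sub_zero, mul_sub] at this
    rw [sub_zero, abs_of_nonneg ht.1]
    push_cast
    linarith [hend.1, hmε t (ht.2.trans hl1)]
  · refine ⟨σ, l, hσ, Or.inr rfl, fun t ht => ?_⟩
    have := hinc t l ht.1 ht.2 le_rfl
    rw [neg_mul, mul_sub] at this
    rw [abs_sub_comm, abs_of_nonneg (sub_nonneg.2 ht.2)]
    push_cast
    linarith [hend.2, hmε (l - t) (by linarith [ht.1])]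

end SignedPowerBound

lemma exists_sign_le_mul_of_le_abs {S : Set ℝ} {g : ℝ → ℝ} {κ : ℝ} (hS : IsPreconnected S)
    (hg : ContinuousOn g S) (hκ : 0 < κ) (h : ∀ t ∈ S, κ ≤ |g t|) :
    ∃ τ : ℝ, (τ = 1 ∨ τ = -1) ∧ ∀ t ∈ S, κ ≤ τ * g t := by
  have hne : ∀ {t}, t ∈ S → g t ≠ 0 := fun ht h0 => by linarith [h _ ht, abs_eq_zero.2 h0]
  rcases hS.eq_or_eq_neg_of_sq_eq hg.abs hg (fun t _ => sq_abs (g t)) hne with habs | habs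
  · refine ⟨1, Or.inl rfl, fun t ht => ?_⟩
    have e : |g t| = g t := habs ht
    linarith [h t ht]
  · refine ⟨-1, Or.inr rfl, fun t ht => ?_⟩
    have e : |g t| = -g t := habs ht
    linarith [h t ht]

lemma ContDiffOn.hasDerivAt_iteratedDerivWithin_Icc {n j : ℕ} {a b t : ℝ} {f : ℝ → ℝ}
    (hf : ContDiffOn ℝ n f (Icc a b)) (hj : j < n) (ht : t ∈ Ioo a b) :
    HasDerivAt (iteratedDerivWithin j f (Icc a b)) (iteratedDerivWithin (j + 1) f (Icc a b) t)
      t := by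
  have hdiff := hf.differentiableOn_iteratedDerivWithin (by exact_mod_cast hj)
    (uniqueDiffOn_Icc (ht.1.trans ht.2))
  rw [iteratedDerivWithin_succ]
  exact (hdiff t (Ioo_subset_Icc_self ht)).hasDerivWithinAt.hasDerivAt (Icc_mem_nhds ht.1 ht.2)

lemma signedPowerBound_iteratedDerivWithin {k : ℕ} {l ε κ : ℝ} {f : ℝ → ℝ} {σ : ℕ → ℝ}
    (hl : 0 < l) (hl1 : l ≤ 1) (hε : 0 ≤ ε) (hκ : 0 < κ) (hf : ContDiffOn ℝ k f (Icc 0 l))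
    (hσ : ∀ j, 1 ≤ j → j ≤ k - 1 → σ j = 1 ∨ σ j = -1)
    (hend : ∀ j, 1 ≤ j → j ≤ k - 1 →
      -ε ≤ σ j * iteratedDerivWithin j f (Icc 0 l) 0 ∧
      -ε ≤ σ j * iteratedDerivWithin j f (Icc 0 l) l)
    (hfk : ∀ t ∈ Icc 0 l, κ ≤ |iteratedDerivWithin k f (Icc 0 l) t|) :
    ∀ m < k, SignedPowerBound l ε κ m (iteratedDerivWithin (k - m) f (Icc 0 l)) := by
  have hcont : ∀ j ≤ k, ContinuousOn (iteratedDerivWithin j f (Icc 0 l)) (Icc 0 l) :=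
    fun j hj => hf.continuousOn_iteratedDerivWithin (by exact_mod_cast hj) (uniqueDiffOn_Icc hl)
  intro m
  induction m with
  | zero =>
    intro _
    obtain ⟨τ, hτ, hbound⟩ :=
      exists_sign_le_mul_of_le_abs isPreconnected_Icc (hcont k le_rfl) hκ hfk
    exact ⟨τ, 0, hτ, Or.inl rfl, fun t ht => by simpa using hbound t ht⟩
  | succ m ih =>
    intro hm
    have hj : k - (m + 1) + 1 = k - m := by omega
    refine SignedPowerBound.of_hasDerivAt hl1 hε hκ.le (hσ _ (by omega) (by omega))
      (hend _ (by omega) (by omega)) (hcont _ (by omega)) (fun t ht => ?_) (ih (by omega))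
    rw [← hj]
    exact hf.hasDerivAt_iteratedDerivWithin_Icc (by omega) ht

/-- Section 3 Lemma: if `σ_j f^{(j)}(0), σ_j f^{(j)}(l) ≥ -ε` for
`1 ≤ j ≤ k-1` and `|f^{(k)}| ≥ κ` on `[0, l]` (`0 ≤ l ≤ 1`), then
`|f(l) - f(0)| ≥ κ l^k / k! - (k-1) ε l`. -/
theorem finite_type_lower_bound (k : ℕ) (hk : 1 ≤ k) (l : ℝ) (hl0 : 0 ≤ l) (hl1 : l ≤ 1)
    (f : ℝ → ℝ) (hf : ContDiffOn ℝ k f (Icc 0 l))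
    (σ : ℕ → ℝ) (hσ : ∀ j, 1 ≤ j → j ≤ k - 1 → σ j = 1 ∨ σ j = -1)
    (ε κ : ℝ) (hε : 0 < ε) (hκ : 0 < κ)
    (hend : ∀ j, 1 ≤ j → j ≤ k - 1 →
      -ε ≤ σ j * iteratedDerivWithin j f (Icc 0 l) 0 ∧
      -ε ≤ σ j * iteratedDerivWithin j f (Icc 0 l) l)
    (hfk : ∀ t ∈ Icc 0 l, κ ≤ |iteratedDerivWithin k f (Icc 0 l) t|) :
    κ * l ^ k / (Nat.factorial k) - ((k : ℝ) - 1) * ε * l ≤ |f l - f 0| := by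
  rcases hl0.eq_or_lt with rfl | hl
  · simp [zero_pow (by omega : k ≠ 0)]
  have hD1 := signedPowerBound_iteratedDerivWithin hl hl1 hε.le hκ hf hσ hend hfk (k - 1)
    (by omega)
  rw [Nat.sub_sub_self hk] at hD1
  have hf' : ∀ t ∈ Ioo 0 l, HasDerivAt f (iteratedDerivWithin 1 f (Icc 0 l) t) t := fun t ht => by
    simpa using hf.hasDerivAt_iteratedDerivWithin_Icc (j := 0) (by omega) ht
  obtain ⟨τ, hτ, hinc⟩ := hD1.exists_sign_le_sub hκ.le hf.continuousOn hf'
  have hfl := hinc 0 l le_rfl hl.le le_rfl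
  rw [Nat.sub_add_cancel hk, Nat.cast_sub hk, sub_zero] at hfl
  have habs : τ * (f l - f 0) ≤ |f l - f 0| := by
    rcases hτ with rfl | rfl
    · simpa using le_abs_self (f l - f 0)
    · simpa using neg_le_abs (f l - f 0)
  push_cast at hfl
  linarith
end

section
/- Let k ≥ 2, let f ∈ C^k([0,l]) with 0 ≤ l ≤ 1, let σ_1, …, σ_{k−1} ∈ {±1}, and let ε > 0, κ > 0. Assume σ_j f^{(j)}(0) ≥ −ε and σ_j f^{(j)}(l) ≥ −ε for every 1 ≤ j ≤ k−1, and |f^{(k)}(t)| ≥ κ for all t ∈ [0,l]. Then either σ_1 f′(t) ≥ κ t^{k−1}/(k−1)! − (k−1)ε for all t ∈ [0,l], or σ_1 f′(t) ≥ κ (l−t)^{k−1}/(k−1)! − (k−1)ε for all t ∈ [0,l]. -/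
/-!
Downward induction on the order of the derivative. Put `g_j = σ_j f^{(j)}`. The `k`-th derivative
is continuous and never vanishes, so it has a constant sign and `±f^{(k)} ≥ κ`. If `±g_j'` is
bounded below by `κ s^m/m! - mε`, with `s = t` or `s = l - t`, then integrating from the end
where the sign of `g_j'` makes `g_j` grow, and using `g_j ≥ -ε` there, bounds `g_j` below by
`κ s^{m+1}/(m+1)! - (m+1)ε`. Superadditivity of `x ↦ x^{m+1}` on `[0, ∞)` makes the bound
insensitive to which end the hypothesis on `g_j'` was measured from, and `l ≤ 1` absorbs the
linear error term.
-/

open Set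

theorem IsPreconnected.exists_sign_mul_ge_of_le_abs {α : Type*} [TopologicalSpace α]
    {S : Set α} (hS : IsPreconnected S) {F : α → ℝ} (hF : ContinuousOn F S) {κ : ℝ}
    (hκ : 0 < κ) (hFκ : ∀ x ∈ S, κ ≤ |F x|) :
    ∃ c : ℝ, (c = 1 ∨ c = -1) ∧ ∀ x ∈ S, κ ≤ c * F x := by
  by_contra! h
  obtain ⟨a, ha, hFa⟩ := h 1 (Or.inl rfl)
  obtain ⟨b, hb, hFb⟩ := h (-1) (Or.inr rfl)
  have hFa' : F a ≤ -κ := by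
    cases abs_cases (F a) <;> linarith [hFκ a ha]
  have hFb' : κ ≤ F b := by
    cases abs_cases (F b) <;> linarith [hFκ b hb]
  obtain ⟨c, hc, hFc⟩ := hS.intermediate_value ha hb hF
    (show (0 : ℝ) ∈ Icc (F a) (F b) from ⟨by linarith, by linarith⟩)
  linarith [hFκ c hc, abs_eq_zero.2 hFc]

theorem ContDiffOn.hasDerivWithinAt_iteratedDerivWithin {𝕜 : Type*} [NontriviallyNormedField 𝕜]
    {F : Type*} [NormedAddCommGroup F] [NormedSpace 𝕜 F] {f : 𝕜 → F} {s : Set 𝕜} {n : ℕ}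
    (hf : ContDiffOn 𝕜 n f s) (hs : UniqueDiffOn 𝕜 s) {j : ℕ} (hj : j < n) {t : 𝕜}
    (ht : t ∈ s) :
    HasDerivWithinAt (iteratedDerivWithin j f s) (iteratedDerivWithin (j + 1) f s t) s t := by
  rw [iteratedDerivWithin_succ]
  exact ((hf.differentiableOn_iteratedDerivWithin (mod_cast hj) hs) t ht).hasDerivWithinAt

theorem monotoneOn_sub_of_hasDerivWithinAt_le {D : Set ℝ} (hD : Convex ℝ D)
    {g g' φ φ' : ℝ → ℝ} (hg : ∀ t ∈ D, HasDerivWithinAt g (g' t) D t)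
    (hφ : ∀ t ∈ D, HasDerivWithinAt φ (φ' t) D t) (hle : ∀ t ∈ D, φ' t ≤ g' t) :
    MonotoneOn (fun t => g t - φ t) D := by
  refine monotoneOn_of_hasDerivWithinAt_nonneg (f' := fun t => g' t - φ' t) hD
    (fun t ht => ((hg t ht).sub (hφ t ht)).continuousWithinAt)
    (fun t ht => ((hg t (interior_subset ht)).sub (hφ t (interior_subset ht))).mono
      interior_subset)
    (fun t ht => sub_nonneg.2 (hle t (interior_subset ht)))

section GrowthBound

variable {l κ ε : ℝ} {m : ℕ}

/-- The lower bound for the derivative `m` orders below the top one. -/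
noncomputable def growthBound (κ ε : ℝ) (m : ℕ) (t : ℝ) : ℝ :=
  κ * t ^ m / m.factorial - m * ε

noncomputable def growthPrimitive (κ ε : ℝ) (m : ℕ) (x : ℝ) : ℝ :=
  κ * x ^ (m + 1) / (m + 1).factorial - m * ε * x

def GrowthDichotomy (l κ ε : ℝ) (m : ℕ) (g : ℝ → ℝ) : Prop :=
  (∀ t ∈ Icc 0 l, growthBound κ ε m t ≤ g t) ∨ (∀ t ∈ Icc 0 l, growthBound κ ε m (l - t) ≤ g t)

theorem hasDerivAt_growthPrimitive (κ ε : ℝ) (m : ℕ) (x : ℝ) :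
    HasDerivAt (growthPrimitive κ ε m) (growthBound κ ε m x) x := by
  have hpow : HasDerivAt (fun y : ℝ => y ^ (m + 1)) ((m + 1 : ℕ) * x ^ m) x := by
    simpa using hasDerivAt_pow (m + 1) x
  refine (((hpow.const_mul κ).div_const _).sub
    ((hasDerivAt_id x).const_mul ((m : ℝ) * ε))).congr_deriv ?_
  rw [growthBound, Nat.factorial_succ]
  push_cast
  field_simp

theorem growthPrimitive_add_le (hκ : 0 ≤ κ) {x y : ℝ} (hx : 0 ≤ x) (hy : 0 ≤ y) :
    growthPrimitive κ ε m x + growthPrimitive κ ε m y ≤ growthPrimitive κ ε m (x + y) := by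
  have h := pow_add_pow_le hx hy m.succ_ne_zero
  simp only [growthPrimitive]
  have : κ * x ^ (m + 1) / (m + 1).factorial + κ * y ^ (m + 1) / (m + 1).factorial ≤
      κ * (x + y) ^ (m + 1) / (m + 1).factorial := by
    rw [← add_div, ← mul_add]
    gcongr
  linarith

theorem growthBound_succ_le (hε : 0 ≤ ε) {x : ℝ} (hx : x ≤ 1) :
    growthBound κ ε (m + 1) x ≤ -ε + growthPrimitive κ ε m x := by
  have : (m : ℝ) * ε * x ≤ m * ε := mul_le_of_le_one_right (by positivity) hx
  simp only [growthBound, growthPrimitive]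
  push_cast
  linarith

theorem growthPrimitive_le_sub_of_hasDerivWithinAt (hκ : 0 ≤ κ) {g g' : ℝ → ℝ}
    (hg : ∀ t ∈ Icc 0 l, HasDerivWithinAt g (g' t) (Icc 0 l) t)
    (hg' : GrowthDichotomy l κ ε m g') {a b : ℝ} (ha : a ∈ Icc 0 l) (hb : b ∈ Icc 0 l)
    (hab : a ≤ b) :
    growthPrimitive κ ε m (b - a) ≤ g b - g a := by
  have hba : 0 ≤ b - a := sub_nonneg.2 hab
  rcases hg' with hg' | hg'
  · have hmono := monotoneOn_sub_of_hasDerivWithinAt_le (convex_Icc 0 l) hg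
      (fun t _ => (hasDerivAt_growthPrimitive κ ε m t).hasDerivWithinAt) hg' ha hb hab
    have := growthPrimitive_add_le (ε := ε) (m := m) hκ hba ha.1
    simp only [sub_add_cancel] at hmono this
    linarith
  · have hφ : ∀ t ∈ Icc 0 l, HasDerivWithinAt (fun t => -growthPrimitive κ ε m (l - t))
        (growthBound κ ε m (l - t)) (Icc 0 l) t := fun t _ => by
      have h := ((hasDerivAt_growthPrimitive κ ε m (l - t)).comp_const_sub l t).neg
      rw [neg_neg] at h
      exact h.hasDerivWithinAt
    have hmono := monotoneOn_sub_of_hasDerivWithinAt_le (convex_Icc 0 l) hg hφ hg' ha hb hab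
    have := growthPrimitive_add_le (ε := ε) (m := m) hκ hba (sub_nonneg.2 hb.2)
    simp only at hmono
    rw [show b - a + (l - b) = l - a by ring] at this
    linarith

/-- `τ = 1` yields the bound measured from `0`, `τ = -1` the one measured from `l`. -/
theorem GrowthDichotomy.of_hasDerivWithinAt (hκ : 0 ≤ κ) (hε : 0 ≤ ε) (hl1 : l ≤ 1)
    {g h : ℝ → ℝ} {τ : ℝ} (hτ : τ = 1 ∨ τ = -1)
    (hg : ∀ t ∈ Icc 0 l, HasDerivWithinAt g (τ * h t) (Icc 0 l) t)
    (hg0 : -ε ≤ g 0) (hgl : -ε ≤ g l) (hh : GrowthDichotomy l κ ε m h) :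
    GrowthDichotomy l κ ε (m + 1) g := by
  rcases hτ with rfl | rfl
  · refine Or.inl fun t ht => ?_
    have h0 : (0 : ℝ) ∈ Icc 0 l := ⟨le_rfl, ht.1.trans ht.2⟩
    have hgrow := growthPrimitive_le_sub_of_hasDerivWithinAt hκ (by simpa using hg) hh h0 ht ht.1
    rw [sub_zero] at hgrow
    linarith [growthBound_succ_le (κ := κ) (m := m) hε (ht.2.trans hl1)]
  · refine Or.inr fun t ht => ?_
    have hl : l ∈ Icc 0 l := ⟨ht.1.trans ht.2, le_rfl⟩
    have hgrow := growthPrimitive_le_sub_of_hasDerivWithinAt (g := -g) hκ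
      (fun t ht => by simpa using (hg t ht).neg) hh ht hl ht.2
    simp only [Pi.neg_apply] at hgrow
    linarith [growthBound_succ_le (κ := κ) (m := m) hε (x := l - t) (by linarith [ht.1])]

theorem GrowthDichotomy.of_hasDerivWithinAt_chain (hκ : 0 ≤ κ) (hε : 0 ≤ ε) (hl1 : l ≤ 1)
    (n : ℕ) (D : ℕ → ℝ → ℝ) (σ : ℕ → ℝ) (hσ : ∀ i ≤ n, σ i = 1 ∨ σ i = -1)
    (hD : ∀ i < n, ∀ t ∈ Icc 0 l, HasDerivWithinAt (D i) (D (i + 1) t) (Icc 0 l) t)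
    (hend : ∀ i < n, -ε ≤ σ i * D i 0 ∧ -ε ≤ σ i * D i l)
    (htop : ∀ t ∈ Icc 0 l, κ ≤ σ n * D n t) :
    GrowthDichotomy l κ ε n (fun t => σ 0 * D 0 t) := by
  induction n generalizing D σ with
  | zero => exact Or.inl fun t ht => by simpa [growthBound] using htop t ht
  | succ n ih =>
    have hh := ih (fun i => D (i + 1)) (fun i => σ (i + 1)) (fun i hi => hσ _ (by omega))
      (fun i hi => hD _ (by omega)) (fun i hi => hend _ (by omega)) htop
    have hτ : σ 0 * σ 1 = 1 ∨ σ 0 * σ 1 = -1 := by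
      rcases hσ 0 (Nat.zero_le _) with h0 | h0 <;> rcases hσ 1 (by omega) with h1 | h1 <;>
        simp [h0, h1]
    have hsq : σ 1 * σ 1 = 1 := by rcases hσ 1 (by omega) with h | h <;> simp [h]
    refine .of_hasDerivWithinAt hκ hε hl1 hτ (fun t ht => ?_) (hend 0 n.succ_pos).1
      (hend 0 n.succ_pos).2 hh
    rw [show σ 0 * σ 1 * (σ 1 * D 1 t) = σ 0 * D 1 t by linear_combination (σ 0 * D 1 t) * hsq]
    exact (hD 0 n.succ_pos t ht).const_mul (σ 0)

end GrowthBound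

/-- if `σ_j f^{(j)} ≥ -ε` at both endpoints of `[0, l]` for `1 ≤ j ≤ k-1`
and `|f^{(k)}| ≥ κ` on `[0, l]`, then either `σ_1 f'(t) ≥ κ t^{k-1}/(k-1)! - (k-1)ε` for
all `t ∈ [0, l]`, or `σ_1 f'(t) ≥ κ (l-t)^{k-1}/(k-1)! - (k-1)ε` for all `t ∈ [0, l]`. -/
theorem first_derivative_dichotomy (k : ℕ) (hk : 2 ≤ k) (l : ℝ)
    (hl0 : 0 ≤ l) (hl1 : l ≤ 1)
    (f : ℝ → ℝ) (hf : ContDiffOn ℝ k f (Icc 0 l))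
    (σ : ℕ → ℝ) (hσ : ∀ j, 1 ≤ j → j ≤ k - 1 → σ j = 1 ∨ σ j = -1)
    (ε κ : ℝ) (hε : 0 < ε) (hκ : 0 < κ)
    (hend : ∀ j, 1 ≤ j → j ≤ k - 1 →
      -ε ≤ σ j * iteratedDerivWithin j f (Icc 0 l) 0 ∧
      -ε ≤ σ j * iteratedDerivWithin j f (Icc 0 l) l)
    (hfk : ∀ t ∈ Icc 0 l, κ ≤ |iteratedDerivWithin k f (Icc 0 l) t|) :
    (∀ t ∈ Icc 0 l,
      κ * t ^ (k - 1) / (Nat.factorial (k - 1)) - ((k : ℝ) - 1) * ε ≤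
        σ 1 * iteratedDerivWithin 1 f (Icc 0 l) t) ∨
    (∀ t ∈ Icc 0 l,
      κ * (l - t) ^ (k - 1) / (Nat.factorial (k - 1)) - ((k : ℝ) - 1) * ε ≤
        σ 1 * iteratedDerivWithin 1 f (Icc 0 l) t) := by
  -- `Icc 0 0` is not a set of unique differentiability, so `l = 0` is treated apart.
  rcases hl0.eq_or_lt with rfl | hl
  · refine Or.inl fun t ht => ?_
    obtain rfl : t = 0 := le_antisymm ht.2 ht.1
    have hk2 : (2 : ℝ) ≤ k := mod_cast hk
    rw [zero_pow (by omega), mul_zero, zero_div, zero_sub]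
    nlinarith [(hend 1 le_rfl (by omega)).1]
  have hUD : UniqueDiffOn ℝ (Icc 0 l) := uniqueDiffOn_Icc hl
  obtain ⟨s, hs, hsk⟩ := isPreconnected_Icc.exists_sign_mul_ge_of_le_abs
    (hf.continuousOn_iteratedDerivWithin le_rfl hUD) hκ hfk
  -- `σ k` is arbitrary; at the top order use the sign of `f^{(k)}` instead.
  set τ := Function.update (fun i => σ (i + 1)) (k - 1) s
  have hτ : ∀ i < k - 1, τ i = σ (i + 1) := fun i hi => Function.update_of_ne hi.ne _ _
  have hchain := GrowthDichotomy.of_hasDerivWithinAt_chain hκ.le hε.le hl1 (k - 1)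
    (fun i => iteratedDerivWithin (i + 1) f (Icc 0 l)) τ
    (fun i hi => by
      rcases hi.lt_or_eq with hi | rfl
      · rw [hτ i hi]; exact hσ _ (by omega) (by omega)
      · simpa [τ] using hs)
    (fun i hi t ht => hf.hasDerivWithinAt_iteratedDerivWithin hUD (by omega) ht)
    (fun i hi => by rw [hτ i hi]; exact hend _ (by omega) (by omega))
    (by simpa [τ, Nat.sub_add_cancel (by omega : 1 ≤ k)] using hsk)
  rw [hτ 0 (by omega)] at hchain
  simpa [GrowthDichotomy, growthBound, Nat.cast_sub (by omega : 1 ≤ k)] using hchain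
end

section
/- Let ψ ∈ C_c^∞(ℝ × ℝ) be supported in the closed unit ball, and for λ ≥ 1, R ≥ 1 define T_{λ,R}^{(1,2)} u(x) = ∫_ℝ e^{iλ(x³θ − xθ²)} ψ(x/R, θ/R²) u(θ) dθ. Suppose d > 0 and C > 0 are such that ‖T_λ^{(1,2)}‖_{L²→L²} ≤ C λ^{−d} for all λ ≥ 1 (where T_λ^{(1,2)} = T_{λ,1}^{(1,2)}). Then for all λ ≥ 1 and R ≥ 1, ‖T_{λ,R}^{(1,2)}‖_{L²→L²} ≤ C R^{3/2 − 5d} λ^{−d}. -/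
open MeasureTheory Complex Filter Topology
open scoped ENNReal NNReal

noncomputable section

/-- The rescaled oscillatory integral operator `T_{λ,R}^{(1,2)}` with phase `x³θ - xθ²`
and density `ψ(x/R, θ/R²)`. -/
def T12R (ψ : ℝ × ℝ → ℝ) (lam R : ℝ) (u : ℝ → ℂ) : ℝ → ℂ :=
  fun x => ∫ θ : ℝ,
    Complex.exp (Complex.I * lam * (x ^ 3 * θ - x * θ ^ 2)) *
      (ψ (x / R, θ / R ^ 2) : ℂ) * u θ

/-- Scaling of lower Lebesgue integrals on `ℝ` under `x ↦ a * x`. -/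
lemma lint_scale (g : ℝ → ℝ≥0∞) {a : ℝ} (ha : a ≠ 0) :
    ∫⁻ x : ℝ, g (a * x) = ENNReal.ofReal |a⁻¹| * ∫⁻ x : ℝ, g x := by
  let e : ℝ ≃ᵐ ℝ := (Homeomorph.mulLeft₀ a ha).toMeasurableEquiv
  calc ∫⁻ x : ℝ, g (a * x)
      = ∫⁻ x : ℝ, g (e x) := rfl
    _ = ∫⁻ x : ℝ, g x ∂(Measure.map e volume) := (MeasureTheory.lintegral_map_equiv g e).symm
    _ = ∫⁻ x : ℝ, g x ∂(Measure.map (a * ·) volume) := rfl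
    _ = ∫⁻ x : ℝ, g x ∂(ENNReal.ofReal |a⁻¹| • volume) := by
        rw [Real.map_volume_mul_left ha]
    _ = ENNReal.ofReal |a⁻¹| * ∫⁻ x : ℝ, g x := lintegral_smul_measure _ _

/-- Scaling of `L²` norms on `ℝ` under `x ↦ a * x`, for `a > 0`. -/
lemma eLp_scale (f : ℝ → ℂ) {a : ℝ} (ha : 0 < a) :
    eLpNorm (fun x => f (a * x)) 2 volume
      = ENNReal.ofReal (a ^ (-(2:ℝ)⁻¹)) * eLpNorm f 2 volume := by
  rw [eLpNorm_eq_lintegral_rpow_enorm_toReal two_ne_zero ENNReal.ofNat_ne_top,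
    eLpNorm_eq_lintegral_rpow_enorm_toReal two_ne_zero ENNReal.ofNat_ne_top]
  have h := lint_scale (fun x => ((‖f x‖ₑ : ℝ≥0∞) ^ (2:ℝ≥0∞).toReal)) ha.ne'
  rw [h, ENNReal.mul_rpow_of_nonneg _ _ (by positivity)]
  congr 1
  rw [abs_of_pos (inv_pos.mpr ha),
    ENNReal.ofReal_rpow_of_pos (inv_pos.mpr ha)]
  congr 1
  rw [← Real.rpow_neg_one a, ← Real.rpow_mul ha.le]
  norm_num

/-- Pointwise rescaling identity for `T12R`. -/
lemma T12R_key (ψ : ℝ × ℝ → ℝ) (lam R : ℝ) (hR : 0 < R) (u : ℝ → ℂ) (x : ℝ) :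
    T12R ψ lam R u (R * x)
      = ((R ^ 2 : ℝ) : ℂ) * T12R ψ (lam * R ^ 5) 1 (fun θ => u (R ^ 2 * θ)) x := by
  have hR2 : (0:ℝ) < R ^ 2 := by positivity
  set f : ℝ → ℂ := fun θ : ℝ =>
    Complex.exp (Complex.I * (lam : ℂ) * (((R * x : ℝ) : ℂ) ^ 3 * (θ : ℂ) -
      ((R * x : ℝ) : ℂ) * (θ : ℂ) ^ 2)) *
      (ψ ((R * x) / R, θ / R ^ 2) : ℂ) * u θ with hf
  have h := MeasureTheory.Measure.integral_comp_mul_left f (R ^ 2)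
  have hint : (∫ θ : ℝ, f θ) = (R ^ 2 : ℝ) • ∫ θ : ℝ, f (R ^ 2 * θ) := by
    rw [h, smul_smul, abs_of_pos (inv_pos.mpr hR2), mul_inv_cancel₀ hR2.ne', one_smul]
  show (∫ θ : ℝ, f θ) = _
  rw [hint, Complex.real_smul]
  congr 1
  apply integral_congr_ae
  filter_upwards with θ
  rw [hf]
  simp only
  have harg : Complex.I * (lam : ℂ) * (((R * x : ℝ) : ℂ) ^ 3 * ((R ^ 2 * θ : ℝ) : ℂ) -
      ((R * x : ℝ) : ℂ) * ((R ^ 2 * θ : ℝ) : ℂ) ^ 2)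
      = Complex.I * ((lam * R ^ 5 : ℝ) : ℂ) * (((x:ℝ) : ℂ) ^ 3 * ((θ:ℝ) : ℂ) -
        ((x:ℝ) : ℂ) * ((θ:ℝ) : ℂ) ^ 2) := by
    push_cast
    ring
  rw [harg, mul_div_cancel_left₀ _ hR.ne', mul_div_cancel_left₀ _ hR2.ne']
  norm_num

/-- estimate (4.6): if `‖T_λ^{(1,2)}‖ ≤ C λ^{-d}` for all `λ ≥ 1`, then
`‖T_{λ,R}^{(1,2)}‖ ≤ C R^{3/2 - 5d} λ^{-d}` for all `λ ≥ 1`, `R ≥ 1`. -/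
theorem T12_rescaled_bound (ψ : ℝ × ℝ → ℝ) (hψ : ContDiff ℝ (⊤ : ℕ∞) ψ)
    (hsupp : tsupport ψ ⊆ Metric.closedBall 0 1)
    (d C : ℝ) (hd : 0 < d) (hC : 0 < C)
    (hbound : ∀ lam : ℝ, 1 ≤ lam → ∀ u : ℝ → ℂ,
      eLpNorm (T12R ψ lam 1 u) 2 volume ≤
        ENNReal.ofReal (C * lam ^ (-d)) * eLpNorm u 2 volume) :
    ∀ lam : ℝ, 1 ≤ lam → ∀ R : ℝ, 1 ≤ R → ∀ u : ℝ → ℂ,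
      eLpNorm (T12R ψ lam R u) 2 volume ≤
        ENNReal.ofReal (C * R ^ ((3 : ℝ) / 2 - 5 * d) * lam ^ (-d)) *
          eLpNorm u 2 volume := by
  intro lam hlam R hR u
  have hR0 : (0:ℝ) < R := lt_of_lt_of_le one_pos hR
  have hlam0 : (0:ℝ) < lam := lt_of_lt_of_le one_pos hlam
  set v : ℝ → ℂ := fun θ => u (R ^ 2 * θ) with hv
  set G : ℝ → ℂ := T12R ψ (lam * R ^ 5) 1 v with hG
  set F : ℝ → ℂ := T12R ψ lam R u with hF
  have hkey : (fun x => F (R * x)) = fun x => ((R ^ 2 : ℝ) : ℂ) * G x := by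
    funext x; exact T12R_key ψ lam R hR0 u x
  -- Step 1 : eLpNorm F in terms of eLpNorm (F (R ·))
  have h1 : eLpNorm F 2 volume
      = ENNReal.ofReal ((R⁻¹) ^ (-(2:ℝ)⁻¹)) * eLpNorm (fun x => F (R * x)) 2 volume := by
    have := eLp_scale (fun x => F (R * x)) (inv_pos.mpr hR0)
    have heq : (fun x => F (R * (R⁻¹ * x))) = F := by
      funext x; rw [← mul_assoc, mul_inv_cancel₀ hR0.ne', one_mul]
    rw [heq] at this
    exact this
  -- Step 2 : constant scalar
  have h3 : eLpNorm (fun x => ((R ^ 2 : ℝ) : ℂ) * G x) 2 volume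
      = ENNReal.ofReal (R ^ 2) * eLpNorm G 2 volume := by
    have := eLpNorm_const_smul (((R ^ 2 : ℝ) : ℂ)) G (2 : ℝ≥0∞) volume
    have hsm : (((R ^ 2 : ℝ) : ℂ) • G) = fun x => ((R ^ 2 : ℝ) : ℂ) * G x := rfl
    rw [hsm] at this
    rw [this]
    congr 1
    rw [← ofReal_norm]
    congr 1
    rw [Complex.norm_real, Real.norm_eq_abs, abs_of_pos (by positivity)]
  -- Step 3 : bound for G
  have hlamR : (1:ℝ) ≤ lam * R ^ 5 := by nlinarith [pow_le_pow_left₀ (by norm_num : (0:ℝ) ≤ 1) hR 5]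
  have h4 := hbound (lam * R ^ 5) hlamR v
  -- Step 4 : eLpNorm v
  have h5 : eLpNorm v 2 volume
      = ENNReal.ofReal ((R ^ 2) ^ (-(2:ℝ)⁻¹)) * eLpNorm u 2 volume :=
    eLp_scale u (by positivity)
  calc eLpNorm F 2 volume
      = ENNReal.ofReal ((R⁻¹) ^ (-(2:ℝ)⁻¹)) * eLpNorm (fun x => F (R * x)) 2 volume := h1
    _ = ENNReal.ofReal ((R⁻¹) ^ (-(2:ℝ)⁻¹)) *
        (ENNReal.ofReal (R ^ 2) * eLpNorm G 2 volume) := by rw [hkey, h3]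
    _ ≤ ENNReal.ofReal ((R⁻¹) ^ (-(2:ℝ)⁻¹)) *
        (ENNReal.ofReal (R ^ 2) *
          (ENNReal.ofReal (C * (lam * R ^ 5) ^ (-d)) * eLpNorm v 2 volume)) := by
        gcongr
    _ = (ENNReal.ofReal ((R⁻¹) ^ (-(2:ℝ)⁻¹)) * ENNReal.ofReal (R ^ 2) *
          ENNReal.ofReal (C * (lam * R ^ 5) ^ (-d)) *
          ENNReal.ofReal ((R ^ 2) ^ (-(2:ℝ)⁻¹))) * eLpNorm u 2 volume := by
        rw [h5]; ring
    _ = ENNReal.ofReal (C * R ^ ((3 : ℝ) / 2 - 5 * d) * lam ^ (-d)) * eLpNorm u 2 volume := by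
        congr 1
        rw [← ENNReal.ofReal_mul (by positivity), ← ENNReal.ofReal_mul (by positivity),
          ← ENNReal.ofReal_mul (by positivity)]
        congr 1
        have e1 : (R⁻¹:ℝ) ^ (-(2:ℝ)⁻¹) = R ^ ((2:ℝ)⁻¹) := by
          rw [← Real.rpow_neg_one R, ← Real.rpow_mul hR0.le]; norm_num
        have e2 : ((R:ℝ) ^ 2 : ℝ) ^ (-(2:ℝ)⁻¹) = R ^ (-1:ℝ) := by
          rw [← Real.rpow_natCast R 2, ← Real.rpow_mul hR0.le]; norm_num
        have e3 : ((lam * R ^ 5 : ℝ)) ^ (-d) = lam ^ (-d) * R ^ (-(5*d)) := by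
          rw [Real.mul_rpow hlam0.le (by positivity), ← Real.rpow_natCast R 5,
            ← Real.rpow_mul hR0.le]
          norm_num
        rw [e1, e2, e3]
        have e4 : (R:ℝ) ^ 2 = R ^ (2:ℝ) := by
          rw [← Real.rpow_natCast R 2]; norm_num
        have e5 : R ^ ((2:ℝ)⁻¹) * R ^ (2:ℝ) * R ^ (-(5*d)) * R ^ (-1:ℝ)
            = R ^ ((3:ℝ)/2 - 5*d) := by
          rw [← Real.rpow_add hR0, ← Real.rpow_add hR0, ← Real.rpow_add hR0]
          congr 1
          ring
        rw [e4, ← e5]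
        ring
  done

end
end

section
/- Let k ≥ 1, n ≥ max(k−1, 1), and S(x,θ) = (x_n^{k+1} + x_n^{k−1} x_{n−1} + … + x_n² x_{n−k+2}) θ_n + x_n θ_n²/2 + x′·θ′ on ℝ^n × ℝ^n. For μ > 0 set X_μ(x) = (μ^n x_1, μ^{n−1} x_2, …, μ^{n−j+1} x_j, …, μ x_n) and Θ_μ(θ) = (μ^{2k+1−n} θ_1, …, μ^{2k+j−n} θ_j, …, μ^{2k−1} θ_{n−1}, μ^k θ_n), so that S(X_μ(x), Θ_μ(θ)) = μ^{2k+1} S(x,θ). Let ψ ∈ C_c^∞(ℝ^n × ℝ^n) and define T_{λ,R}^{(1,k)} u(x) = ∫_{ℝ^n} e^{iλS(x,θ)} ψ(X_{R^{−1}}(x), Θ_{R^{−1}}(θ)) u(θ) dθ. Suppose d > 0 and C > 0 are such that ‖T_{λ,1}^{(1,k)}‖_{L²→L²} ≤ C λ^{−d} for all λ ≥ 1. Then for all λ ≥ 1 and R ≥ 1, ‖T_{λ,R}^{(1,k)}‖_{L²→L²} ≤ C (λ R^{2k+1})^{−d} R^{(n(2k+1) − k)/2}. -/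
open MeasureTheory Complex Filter Topology ENNReal

noncomputable section

/-- The model phase
`S(x,θ) = (x_n^{k+1} + x_n^{k-1} x_{n-1} + ⋯ + x_n² x_{n-k+2}) θ_n + x_n θ_n²/2 + x'·θ'`
(with `n = m + 1`, coordinates indexed from `0`). -/
def phase1k (m k : ℕ) (p : PS (m + 1)) : ℝ :=
  (p.1 (Fin.last m) ^ (k + 1) +
      ∑ j ∈ Finset.Icc 1 (k - 2),
        p.1 (Fin.last m) ^ (k - j) * p.1 ⟨m - j, Nat.lt_succ_of_le (Nat.sub_le m j)⟩) *
    p.2 (Fin.last m) +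
  p.1 (Fin.last m) * p.2 (Fin.last m) ^ 2 / 2 +
  ∑ i : Fin m, p.1 i.castSucc * p.2 i.castSucc

/-- The scaling `X_μ(x) = (μ^n x_1, …, μ^{n-j+1} x_j, …, μ x_n)` (1-based index `j`). -/
def Xscale (m : ℕ) (μ : ℝ) (x : Fin (m + 1) → ℝ) : Fin (m + 1) → ℝ :=
  fun i => μ ^ (m - (i : ℕ) + 1) * x i

/-- The scaling `Θ_μ(θ) = (μ^{2k+1-n} θ_1, …, μ^{2k+j-n} θ_j, …, μ^{2k-1} θ_{n-1}, μ^k θ_n)`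
(1-based index `j ≤ n - 1`). -/
def Θscale (m k : ℕ) (μ : ℝ) (θ : Fin (m + 1) → ℝ) : Fin (m + 1) → ℝ :=
  fun i => if (i : ℕ) < m
    then μ ^ (2 * (k : ℤ) + (i : ℕ) + 1 - ((m : ℤ) + 1)) * θ i
    else μ ^ (k : ℕ) * θ i

/-- The rescaled model operator `T_{λ,R}^{(1,k)}`, with density `ψ(X_{R⁻¹}(x), Θ_{R⁻¹}(θ))`. -/
def T1kR (m k : ℕ) (ψ : PS (m + 1) → ℝ) (lam R : ℝ) (u : (Fin (m + 1) → ℝ) → ℂ) :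
    (Fin (m + 1) → ℝ) → ℂ :=
  fun x => ∫ θ, Complex.exp (Complex.I * lam * phase1k m k (x, θ)) *
    (ψ (Xscale m R⁻¹ x, Θscale m k R⁻¹ θ) : ℂ) * u θ

namespace T1kAux

lemma prod_zpow₀ {ι : Type*} (s : Finset ι) {a : ℝ} (ha : a ≠ 0) (f : ι → ℤ) :
    ∏ i ∈ s, a ^ f i = a ^ (∑ i ∈ s, f i) := by
  classical
  induction s using Finset.induction with
  | empty => simp
  | insert a s h ih => rw [Finset.prod_insert h, Finset.sum_insert h, ih, zpow_add₀ ha]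

def scaleEquiv {n : ℕ} (c : Fin n → ℝ) (hc : ∀ i, c i ≠ 0) : (Fin n → ℝ) ≃ᵐ (Fin n → ℝ) :=
  MeasurableEquiv.piCongrRight fun i => (Homeomorph.mulLeft₀ (c i) (hc i)).toMeasurableEquiv

lemma scaleEquiv_apply {n : ℕ} (c : Fin n → ℝ) (hc : ∀ i, c i ≠ 0) (x : Fin n → ℝ) :
    scaleEquiv c hc x = fun i => c i * x i := rfl

lemma map_scaleEquiv {n : ℕ} (c : Fin n → ℝ) (hc : ∀ i, c i ≠ 0) :
    volume.map (scaleEquiv c hc) = ENNReal.ofReal (∏ i, |c i|)⁻¹ • volume := by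
  have h1 : ⇑(scaleEquiv c hc) = ⇑(Matrix.toLin' (Matrix.diagonal c)) := by
    funext x
    rw [scaleEquiv_apply, Matrix.toLin'_apply]
    funext i
    rw [Matrix.mulVec_diagonal]
  have hdet : LinearMap.det (Matrix.toLin' (Matrix.diagonal c)) = ∏ i, c i := by
    rw [LinearMap.det_toLin', Matrix.det_diagonal]
  rw [h1, Real.map_linearMap_volume_pi_eq_smul_volume_pi
    (by rw [hdet]; exact Finset.prod_ne_zero_iff.2 fun i _ => hc i), hdet, abs_inv,
    Finset.abs_prod]

lemma eLpNorm_map_equiv' {α β : Type*} [MeasurableSpace α] [MeasurableSpace β]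
    (μ : Measure α) (e : α ≃ᵐ β) (f : β → ℂ) :
    eLpNorm f 2 (μ.map e) = eLpNorm (fun x => f (e x)) 2 μ := by
  rw [eLpNorm_eq_lintegral_rpow_enorm_toReal two_ne_zero ENNReal.ofNat_ne_top,
    eLpNorm_eq_lintegral_rpow_enorm_toReal two_ne_zero ENNReal.ofNat_ne_top,
    MeasureTheory.lintegral_map_equiv _ e]

lemma Xscale_inv (m : ℕ) {R : ℝ} (hR : R ≠ 0) (x : Fin (m+1) → ℝ) :
    Xscale m R⁻¹ (Xscale m R x) = x := by
  funext i
  simp only [Xscale, ← mul_assoc, ← mul_pow, inv_mul_cancel₀ hR, one_pow, one_mul]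

lemma Θscale_inv (m k : ℕ) {R : ℝ} (hR : R ≠ 0) (θ : Fin (m+1) → ℝ) :
    Θscale m k R⁻¹ (Θscale m k R θ) = θ := by
  funext i
  simp only [Θscale]
  split_ifs with h
  · rw [← mul_assoc, ← mul_zpow, inv_mul_cancel₀ hR, one_zpow, one_mul]
  · rw [← mul_assoc, ← mul_pow, inv_mul_cancel₀ hR, one_pow, one_mul]

lemma Xscale_one (m : ℕ) (x : Fin (m+1) → ℝ) : Xscale m 1 x = x := by
  funext i; simp [Xscale]

lemma Θscale_one (m k : ℕ) (θ : Fin (m+1) → ℝ) : Θscale m k 1 θ = θ := by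
  funext i; simp [Θscale]

lemma phase1k_scale (m k : ℕ) (hkm : k ≤ m + 2) {R : ℝ} (hR : 0 < R)
    (x θ : Fin (m+1) → ℝ) :
    phase1k m k (Xscale m R x, Θscale m k R θ) = R ^ (2*k+1) * phase1k m k (x, θ) := by
  have hRne : R ≠ 0 := hR.ne'
  simp only [phase1k, Xscale, Θscale, Fin.val_last, Fin.coe_castSucc, Nat.sub_self,
    zero_add, pow_one, Fin.is_lt, if_true, lt_self_iff_false, if_false]
  have hsum1 : ∑ j ∈ Finset.Icc 1 (k - 2),
      (R * x (Fin.last m)) ^ (k - j) *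
        (R ^ (m - (m - j) + 1) * x ⟨m - j, Nat.lt_succ_of_le (Nat.sub_le m j)⟩) =
      R ^ (k+1) * ∑ j ∈ Finset.Icc 1 (k - 2),
        x (Fin.last m) ^ (k - j) * x ⟨m - j, Nat.lt_succ_of_le (Nat.sub_le m j)⟩ := by
    rw [Finset.mul_sum]
    refine Finset.sum_congr rfl fun j hj => ?_
    obtain ⟨hj1, hj2⟩ := Finset.mem_Icc.1 hj
    have hjm : j ≤ m := by omega
    have hpow : R ^ (k - j) * R ^ (m - (m - j) + 1) = R ^ (k + 1) := by
      rw [← pow_add]; congr 1; omega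
    calc (R * x (Fin.last m)) ^ (k - j) *
          (R ^ (m - (m - j) + 1) * x ⟨m - j, Nat.lt_succ_of_le (Nat.sub_le m j)⟩)
        = (R ^ (k - j) * R ^ (m - (m - j) + 1)) *
          (x (Fin.last m) ^ (k - j) * x ⟨m - j, Nat.lt_succ_of_le (Nat.sub_le m j)⟩) := by
          rw [mul_pow]; ring
      _ = _ := by rw [hpow]
  have hsum2 : ∑ i : Fin m,
      (R ^ (m - (i:ℕ) + 1) * x i.castSucc) *
        (R ^ (2 * (k : ℤ) + (i:ℕ) + 1 - ((m : ℤ) + 1)) * θ i.castSucc) =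
      R ^ (2*k+1) * ∑ i : Fin m, x i.castSucc * θ i.castSucc := by
    rw [Finset.mul_sum]
    refine Finset.sum_congr rfl fun i _ => ?_
    have hpow : R ^ (m - (i:ℕ) + 1) * R ^ (2 * (k : ℤ) + (i:ℕ) + 1 - ((m : ℤ) + 1)) =
        R ^ (2*k+1) := by
      rw [← zpow_natCast R (m - (i:ℕ) + 1), ← zpow_add₀ hRne, ← zpow_natCast R (2*k+1)]
      congr 1
      have hi : (i:ℕ) ≤ m := le_of_lt i.isLt
      omega
    calc (R ^ (m - (i:ℕ) + 1) * x i.castSucc) *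
          (R ^ (2 * (k : ℤ) + (i:ℕ) + 1 - ((m : ℤ) + 1)) * θ i.castSucc)
        = (R ^ (m - (i:ℕ) + 1) * R ^ (2 * (k : ℤ) + (i:ℕ) + 1 - ((m : ℤ) + 1))) *
          (x i.castSucc * θ i.castSucc) := by ring
      _ = _ := by rw [hpow]
  rw [hsum1, hsum2]
  have h1 : R ^ (k+1) * R ^ k = R ^ (2*k+1) := by rw [← pow_add]; congr 1; omega
  have h2 : R * (R ^ k) ^ 2 = R ^ (2*k+1) := by
    rw [← pow_mul, ← pow_succ']; congr 1; omega
  have hmp : (R * x (Fin.last m)) ^ (k+1) = R ^ (k+1) * x (Fin.last m) ^ (k+1) := mul_pow ..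
  rw [hmp]
  set a := x (Fin.last m)
  set t := θ (Fin.last m)
  set S := ∑ j ∈ Finset.Icc 1 (k - 2),
    a ^ (k - j) * x ⟨m - j, Nat.lt_succ_of_le (Nat.sub_le m j)⟩
  set Sc := ∑ i : Fin m, x i.castSucc * θ i.castSucc
  linear_combination (t * a^(k+1) + t * S) * h1 + (a * t^2 / 2) * h2

end T1kAux

open T1kAux

/-- proof of Proposition 4.2: if `‖T_{λ,1}^{(1,k)}‖ ≤ C λ^{-d}` for all
`λ ≥ 1`, then `‖T_{λ,R}^{(1,k)}‖ ≤ C (λ R^{2k+1})^{-d} R^{(n(2k+1)-k)/2}` for `λ, R ≥ 1`. -/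
theorem T1k_rescaled_bound (m k : ℕ) (hk : 1 ≤ k) (hkn : k - 1 ≤ m + 1)
    (ψ : PS (m + 1) → ℝ) (hψ : ContDiff ℝ (⊤ : ℕ∞) ψ) (hψc : HasCompactSupport ψ)
    (d C : ℝ) (hd : 0 < d) (hC : 0 < C)
    (hbound : ∀ lam : ℝ, 1 ≤ lam → ∀ u : (Fin (m + 1) → ℝ) → ℂ,
      eLpNorm (T1kR m k ψ lam 1 u) 2 volume ≤
        ENNReal.ofReal (C * lam ^ (-d)) * eLpNorm u 2 volume) :
    ∀ lam : ℝ, 1 ≤ lam → ∀ R : ℝ, 1 ≤ R → ∀ u : (Fin (m + 1) → ℝ) → ℂ,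
      eLpNorm (T1kR m k ψ lam R u) 2 volume ≤
        ENNReal.ofReal (C * (lam * R ^ (2 * (k : ℝ) + 1)) ^ (-d) *
            R ^ ((((m : ℝ) + 1) * (2 * (k : ℝ) + 1) - (k : ℝ)) / 2)) *
          eLpNorm u 2 volume := by
  intro lam hlam R hR u
  have hkm : k ≤ m + 2 := by omega
  have hR0 : (0:ℝ) < R := lt_of_lt_of_le one_pos hR
  have hRne : R ≠ 0 := hR0.ne'
  -- scaling coefficients
  set cX : Fin (m+1) → ℝ := fun i => R ^ (m - (i:ℕ) + 1) with hcXdef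
  set ζ : Fin (m+1) → ℤ :=
    fun i => if (i:ℕ) < m then 2 * (k:ℤ) + (i:ℕ) + 1 - ((m:ℤ) + 1) else (k:ℤ) with hζdef
  set cΘ : Fin (m+1) → ℝ := fun i => R ^ ζ i with hcΘdef
  have hcX : ∀ i, cX i ≠ 0 := fun i => (pow_pos hR0 _).ne'
  have hcΘ : ∀ i, cΘ i ≠ 0 := fun i => (zpow_pos hR0 _).ne'
  set EX := scaleEquiv cX hcX with hEXdef
  set EΘ := scaleEquiv cΘ hcΘ with hEΘdef
  have hEXapp : ∀ x, EX x = Xscale m R x := fun x => rfl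
  have hEΘapp : ∀ θ, EΘ θ = Θscale m k R θ := by
    intro θ
    funext i
    show cΘ i * θ i = _
    simp only [hcΘdef, hζdef, Θscale]
    split_ifs with h
    · rfl
    · rw [zpow_natCast]
  set BX : ℕ := ∑ i : Fin (m+1), (m - (i:ℕ) + 1) with hBXdef
  set AΘ : ℤ := ∑ i : Fin (m+1), ζ i with hAΘdef
  set DX : ℝ := ∏ i : Fin (m+1), |cX i| with hDXdef
  set DΘ : ℝ := ∏ i : Fin (m+1), |cΘ i| with hDΘdef
  have hDX : DX = R ^ BX := by
    rw [hDXdef, hBXdef, ← Finset.prod_pow_eq_pow_sum]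
    exact Finset.prod_congr rfl fun i _ => abs_of_pos (pow_pos hR0 _)
  have hDΘ : DΘ = R ^ AΘ := by
    rw [hDΘdef, hAΘdef, ← prod_zpow₀ _ hRne]
    exact Finset.prod_congr rfl fun i _ => abs_of_pos (zpow_pos hR0 _)
  have hDXpos : 0 < DX := by rw [hDX]; exact pow_pos hR0 _
  have hDΘpos : 0 < DΘ := by rw [hDΘ]; exact zpow_pos hR0 _
  -- exponent bookkeeping
  have hABsum : (BX : ℤ) + AΘ = ((m:ℤ) + 1) * (2 * (k:ℤ) + 1) - (k:ℤ) := by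
    have h1 : (BX : ℤ) + AΘ =
        ∑ i : Fin (m+1), (((m - (i:ℕ) + 1 : ℕ) : ℤ) + ζ i) := by
      rw [hBXdef, hAΘdef, Nat.cast_sum, Finset.sum_add_distrib]
    have h2 : ∀ i : Fin (m+1), ((m - (i:ℕ) + 1 : ℕ) : ℤ) + ζ i =
        if (i:ℕ) < m then (2 * (k:ℤ) + 1) else ((k:ℤ) + 1) := by
      intro i
      have hi : (i:ℕ) ≤ m := Nat.lt_succ_iff.1 i.isLt
      simp only [hζdef]
      split_ifs with h <;> omega
    rw [h1, Finset.sum_congr rfl fun i _ => h2 i]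
    rw [Fin.sum_univ_castSucc]
    simp only [Fin.coe_castSucc, Fin.is_lt, if_true, Fin.val_last, lt_self_iff_false, if_false,
      Finset.sum_const, Finset.card_univ, Fintype.card_fin, nsmul_eq_mul]
    push_cast
    ring
  set lam' : ℝ := lam * R ^ (2*k+1) with hlam'def
  have hRpow1 : (1:ℝ) ≤ R ^ (2*k+1) := one_le_pow₀ hR
  have hlam'1 : 1 ≤ lam' := le_trans hlam (le_mul_of_one_le_right (by linarith) hRpow1)
  set v : (Fin (m+1) → ℝ) → ℂ := fun θ => u (Θscale m k R θ) with hvdef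
  -- measure identities
  have hvolX : (volume : Measure (Fin (m+1) → ℝ)) = ENNReal.ofReal DX • volume.map EX := by
    rw [hEXdef, map_scaleEquiv, ← hDXdef, smul_smul, ← ENNReal.ofReal_mul hDXpos.le,
      mul_inv_cancel₀ hDXpos.ne', ENNReal.ofReal_one, one_smul]
  have hvolΘ : (volume : Measure (Fin (m+1) → ℝ)) = ENNReal.ofReal DΘ • volume.map EΘ := by
    rw [hEΘdef, map_scaleEquiv, ← hDΘdef, smul_smul, ← ENNReal.ofReal_mul hDΘpos.le,
      mul_inv_cancel₀ hDΘpos.ne', ENNReal.ofReal_one, one_smul]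
  -- pointwise identity
  have key : ∀ x, T1kR m k ψ lam R u (Xscale m R x) = (DΘ : ℂ) * T1kR m k ψ lam' 1 v x := by
    intro x
    have step1 : T1kR m k ψ lam R u (Xscale m R x) =
        DΘ • ∫ θ, Complex.exp (Complex.I * lam * phase1k m k (Xscale m R x, EΘ θ)) *
          (ψ (Xscale m R⁻¹ (Xscale m R x), Θscale m k R⁻¹ (EΘ θ)) : ℂ) * u (EΘ θ) := by
      rw [T1kR]
      conv_lhs => rw [hvolΘ]
      rw [integral_smul_measure, MeasureTheory.integral_map_equiv,
        ENNReal.toReal_ofReal hDΘpos.le]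
    rw [step1, Complex.real_smul]
    congr 1
    rw [T1kR]
    refine congrArg (fun f : (Fin (m+1) → ℝ) → ℂ => ∫ θ, f θ) (funext fun θ => ?_)
    rw [hEΘapp, Xscale_inv m hRne, Θscale_inv m k hRne,
      phase1k_scale m k hkm hR0, inv_one, Xscale_one, Θscale_one]
    have harg : (Complex.I * (lam : ℂ) * ((R ^ (2*k+1) * phase1k m k (x, θ) : ℝ) : ℂ)) =
        Complex.I * ((lam * R ^ (2*k+1) : ℝ) : ℂ) * ((phase1k m k (x, θ) : ℝ) : ℂ) := by
      push_cast
      ring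
    rw [harg]
  -- norm computation
  have hrX : ((1 : ℝ≥0∞) / 2).toReal = (2⁻¹ : ℝ) := by simp
  have hnormv : eLpNorm v 2 volume = ENNReal.ofReal DΘ⁻¹ ^ (2⁻¹ : ℝ) * eLpNorm u 2 volume := by
    have h1 : eLpNorm v 2 volume = eLpNorm u 2 (volume.map EΘ) := by
      rw [eLpNorm_map_equiv']
      exact congrArg (fun f => eLpNorm f 2 volume) (funext fun θ => by rw [hEΘapp])
    rw [h1, hEΘdef, map_scaleEquiv, ← hDΘdef,
      eLpNorm_smul_measure_of_ne_top ENNReal.ofNat_ne_top, smul_eq_mul, hrX]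
  have hkey2 : (fun x => T1kR m k ψ lam R u (EX x)) = (DΘ : ℂ) • T1kR m k ψ lam' 1 v := by
    funext x
    rw [hEXapp, key x]
    rfl
  have hDΘnorm : ‖(DΘ : ℂ)‖ₑ = ENNReal.ofReal DΘ := by
    rw [← ofReal_norm, Complex.norm_real, Real.norm_eq_abs, abs_of_pos hDΘpos]
  calc eLpNorm (T1kR m k ψ lam R u) 2 volume
      = ENNReal.ofReal DX ^ (2⁻¹ : ℝ) *
          eLpNorm (fun x => T1kR m k ψ lam R u (EX x)) 2 volume := by
        conv_lhs => rw [hvolX]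
        rw [eLpNorm_smul_measure_of_ne_top ENNReal.ofNat_ne_top, eLpNorm_map_equiv',
          smul_eq_mul, hrX]
    _ = ENNReal.ofReal DX ^ (2⁻¹ : ℝ) *
          (ENNReal.ofReal DΘ * eLpNorm (T1kR m k ψ lam' 1 v) 2 volume) := by
        rw [hkey2, eLpNorm_const_smul, hDΘnorm]
    _ ≤ ENNReal.ofReal DX ^ (2⁻¹ : ℝ) *
          (ENNReal.ofReal DΘ * (ENNReal.ofReal (C * lam' ^ (-d)) *
            (ENNReal.ofReal DΘ⁻¹ ^ (2⁻¹ : ℝ) * eLpNorm u 2 volume))) := by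
        gcongr
        rw [← hnormv]
        exact hbound lam' hlam'1 v
    _ = (ENNReal.ofReal DX ^ (2⁻¹ : ℝ) * ENNReal.ofReal DΘ *
          ENNReal.ofReal (C * lam' ^ (-d)) * ENNReal.ofReal DΘ⁻¹ ^ (2⁻¹ : ℝ)) *
          eLpNorm u 2 volume := by ring
    _ = ENNReal.ofReal (C * (lam * R ^ (2 * (k : ℝ) + 1)) ^ (-d) *
          R ^ ((((m : ℝ) + 1) * (2 * (k : ℝ) + 1) - (k : ℝ)) / 2)) *
          eLpNorm u 2 volume := by
        congr 1
        rw [ENNReal.ofReal_rpow_of_pos hDXpos, ENNReal.ofReal_rpow_of_pos (inv_pos.2 hDΘpos),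
          ← ENNReal.ofReal_mul (Real.rpow_nonneg hDXpos.le _),
          ← ENNReal.ofReal_mul (by positivity),
          ← ENNReal.ofReal_mul (by positivity)]
        congr 1
        have hlamEq : lam' = lam * R ^ (2 * (k : ℝ) + 1) := by
          rw [hlam'def, ← Real.rpow_natCast R (2*k+1)]
          norm_num
        have e1 : DX ^ (2⁻¹ : ℝ) = R ^ ((BX : ℝ) * 2⁻¹) := by
          rw [hDX, ← Real.rpow_natCast R BX, ← Real.rpow_mul hR0.le]
        have e2 : (DΘ⁻¹) ^ (2⁻¹ : ℝ) = R ^ (-(AΘ : ℝ) * 2⁻¹) := by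
          rw [hDΘ, ← Real.rpow_intCast R AΘ, ← Real.rpow_neg hR0.le, ← Real.rpow_mul hR0.le]
        have e3 : DΘ = R ^ ((AΘ : ℝ)) := by rw [hDΘ, Real.rpow_intCast]
        have hcast : (BX : ℝ) + (AΘ : ℝ) = ((m:ℝ) + 1) * (2 * (k:ℝ) + 1) - (k:ℝ) := by
          exact_mod_cast congrArg (Int.cast : ℤ → ℝ) hABsum
        have hpowEq : DX ^ (2⁻¹ : ℝ) * DΘ * (DΘ⁻¹) ^ (2⁻¹ : ℝ) =
            R ^ ((((m : ℝ) + 1) * (2 * (k : ℝ) + 1) - (k : ℝ)) / 2) := by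
          rw [e1, e2, e3, ← Real.rpow_add hR0, ← Real.rpow_add hR0]
          congr 1
          linarith
        calc DX ^ (2⁻¹ : ℝ) * DΘ * (C * lam' ^ (-d)) * (DΘ⁻¹) ^ (2⁻¹ : ℝ)
            = (DX ^ (2⁻¹ : ℝ) * DΘ * (DΘ⁻¹) ^ (2⁻¹ : ℝ)) * (C * lam' ^ (-d)) := by ring
          _ = _ := by rw [hpowEq, hlamEq]; ring

end
end
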